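/- Let U be any unitary operator on ℓ²(ℤ; ℂ²) and x̂(t) = U^{−t} x̂ U^{t} the Heisenberg position operator. Then for every ξ ∈ ℝ, s-lim_{t→∞} exp(iξ x̂(t)/t) Π_p(U) = Π_p(U), where Π_p(U) is the orthogonal projection onto the closed linear span of all eigenvectors of U. -/

import Mathlib

noncomputable section
open MeasureTheory Filter Topology Complex

/-- The Hilbert space `ℓ²(ℤ; ℂ²)` of the quantum walk. -/
abbrev QWH := lp (fun _ : ℤ => EuclideanSpace ℂ (Fin 2)) 2

/-- `M θ` is the unitary multiplication operator `exp(iθx̂)`: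
`(M θ Ψ)(x) = e^{iθx} Ψ(x)`. -/
def IsPosExpFamily (M : ℝ → (QWH →L[ℂ] QWH)) : Prop :=
  ∀ (θ : ℝ) (Ψ : QWH) (x : ℤ) (i : Fin 2),
    (M θ Ψ) x i = Complex.exp (Complex.I * θ * x) * Ψ x i

/-- The closed linear span of all eigenvectors of an operator `U`. -/
def eigSpan {E : Type*} [NormedAddCommGroup E] [InnerProductSpace ℂ E]
    (U : E →L[ℂ] E) : Set E :=
  closure (Submodule.span ℂ {φ : E | φ ≠ 0 ∧ ∃ c : ℂ, U φ = c • φ} : Set E)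

/-- `P` is the orthogonal projection of a Hilbert space onto the set `S`
(which is required to be its fixed-point set). -/
def IsOrthoProjOnto {E : Type*} [NormedAddCommGroup E] [InnerProductSpace ℂ E]
    [CompleteSpace E] (P : E →L[ℂ] E) (S : Set E) : Prop :=
  IsSelfAdjoint P ∧ P.comp P = P ∧ ∀ ψ, (P ψ = ψ ↔ ψ ∈ S)

/-! Let `φ` be an eigenvector of `U` with eigenvalue `c`; then `|c| = 1` and `U^t φ = c^t φ`, so
`‖U^{-t} e^{iξx̂/t} U^t φ - φ‖ = ‖e^{iξx̂/t} φ - φ‖`, which tends to `0` by dominated convergence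
because `ξ/t → 0`. The operators `U^{-t} e^{iξx̂/t} U^t` are isometries, hence equicontinuous, so
the vectors on which they converge strongly to the identity form a closed subspace. It contains
the eigenvectors, hence `eigSpan U`, which is the range of `Π_p(U)`. -/

lemma lp.norm_sq_eq_tsum {α : Type*} {E : α → Type*} [∀ i, NormedAddCommGroup (E i)]
    (f : lp E 2) : ‖f‖ ^ 2 = ∑' i, ‖f i‖ ^ 2 := by
  simpa [Real.rpow_two] using lp.norm_rpow_eq_tsum (p := 2) (by norm_num) f

lemma norm_exp_I_mul_ofReal_mul_intCast (θ : ℝ) (x : ℤ) : ‖exp (I * θ * x)‖ = 1 := by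
  simpa [mul_assoc] using norm_exp_I_mul_ofReal (θ * x)

namespace IsPosExpFamily

variable {M : ℝ → QWH →L[ℂ] QWH}

lemma apply_apply (hM : IsPosExpFamily M) (θ : ℝ) (Ψ : QWH) (x : ℤ) :
    M θ Ψ x = exp (I * θ * x) • Ψ x := by
  ext i
  exact hM θ Ψ x i

lemma norm_apply (hM : IsPosExpFamily M) (θ : ℝ) (Ψ : QWH) : ‖M θ Ψ‖ = ‖Ψ‖ := by
  rw [← sq_eq_sq₀ (norm_nonneg _) (norm_nonneg _), lp.norm_sq_eq_tsum, lp.norm_sq_eq_tsum]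
  simp only [hM.apply_apply, norm_smul, norm_exp_I_mul_ofReal_mul_intCast, one_mul]

lemma norm_apply_sub_self_sq (hM : IsPosExpFamily M) (θ : ℝ) (Ψ : QWH) :
    ‖M θ Ψ - Ψ‖ ^ 2 = ∑' x : ℤ, ‖exp (I * θ * x) - 1‖ ^ 2 * ‖Ψ x‖ ^ 2 := by
  rw [lp.norm_sq_eq_tsum]
  congr! 2 with x
  rw [lp.coeFn_sub, Pi.sub_apply, hM.apply_apply, ← mul_pow, ← norm_smul, sub_smul, one_smul]

lemma tendsto_nhds_zero (hM : IsPosExpFamily M) (Ψ : QWH) :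
    Tendsto (fun θ => M θ Ψ) (𝓝 0) (𝓝 Ψ) := by
  rw [tendsto_iff_norm_sub_tendsto_zero]
  suffices Tendsto (fun θ => ‖M θ Ψ - Ψ‖ ^ 2) (𝓝 0) (𝓝 0) by
    simpa [Real.sqrt_sq (norm_nonneg _)] using this.sqrt
  simp only [hM.norm_apply_sub_self_sq]
  rw [← tsum_zero]
  refine tendsto_tsum_of_dominated_convergence (bound := fun x => 4 * ‖Ψ x‖ ^ 2) ?_ ?_ ?_
  · simpa using ((lp.memℓp Ψ).summable (p := 2) (by norm_num)).mul_left 4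
  · intro x
    have hcont : Continuous fun θ : ℝ => ‖exp (I * θ * x) - 1‖ ^ 2 * ‖Ψ x‖ ^ 2 := by fun_prop
    simpa using hcont.tendsto 0
  · refine Eventually.of_forall fun θ x => ?_
    have hexp : ‖exp (I * θ * x) - 1‖ ≤ 2 := by
      calc ‖exp (I * θ * x) - 1‖ ≤ ‖exp (I * θ * x)‖ + ‖(1 : ℂ)‖ := norm_sub_le _ _
        _ = 2 := by rw [norm_exp_I_mul_ofReal_mul_intCast]; norm_num
    rw [Real.norm_of_nonneg (by positivity)]
    calc ‖exp (I * θ * x) - 1‖ ^ 2 * ‖Ψ x‖ ^ 2 ≤ 2 ^ 2 * ‖Ψ x‖ ^ 2 := by gcongr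
      _ = 4 * ‖Ψ x‖ ^ 2 := by norm_num

end IsPosExpFamily

section StrongConvergence

variable {ι 𝕜 E : Type*} [NontriviallyNormedField 𝕜] [NormedAddCommGroup E] [NormedSpace 𝕜 E]

def tendstoSelfSubmodule (T : ι → E →L[𝕜] E) (l : Filter ι) : Submodule 𝕜 E where
  carrier := {f | Tendsto (fun i => T i f) l (𝓝 f)}
  add_mem' {f g} hf hg := by simpa using hf.add hg
  zero_mem' := by simpa using tendsto_const_nhds
  smul_mem' c f hf := by simpa using hf.const_smul c

lemma mem_tendstoSelfSubmodule {T : ι → E →L[𝕜] E} {l : Filter ι} {f : E} :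
    f ∈ tendstoSelfSubmodule T l ↔ Tendsto (fun i => T i f) l (𝓝 f) := Iff.rfl

lemma isClosed_tendstoSelfSubmodule {T : ι → E →L[𝕜] E} (l : Filter ι)
    (hT : ∃ C, ∀ i, ‖T i‖ ≤ C) : IsClosed (tendstoSelfSubmodule T l : Set E) :=
  Equicontinuous.isClosed_setOfPred_tendsto (((NormedSpace.equicontinuous_TFAE T).out 5 1).1 hT)
    continuous_id

end StrongConvergence

lemma eigSpan_subset {H : Type*} [NormedAddCommGroup H] [InnerProductSpace ℂ H] {U : H →L[ℂ] H} {S : Submodule ℂ H} (hS : IsClosed (S : Set H))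
    (h : ∀ φ ≠ 0, ∀ c : ℂ, U φ = c • φ → φ ∈ S) : eigSpan U ⊆ S :=
  closure_minimal (Submodule.span_le.2 fun φ ⟨hφ, c, hc⟩ => h φ hφ c hc) hS

lemma ContinuousLinearMap.pow_apply_of_apply_eq_smul {𝕜 E : Type*} [NormedField 𝕜]
    [NormedAddCommGroup E] [NormedSpace 𝕜 E] {A : E →L[𝕜] E} {c : 𝕜} {φ : E}
    (h : A φ = c • φ) (n : ℕ) : (A ^ n) φ = c ^ n • φ := by
  induction n <;> simp [*, pow_succ A, smul_smul, pow_succ' c]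

namespace Unitary

variable {𝕜 H : Type*} [RCLike 𝕜] [NormedAddCommGroup H] [InnerProductSpace 𝕜 H] [CompleteSpace H]

lemma inv_apply_apply (u : unitary (H →L[𝕜] H)) (f : H) :
    (↑u⁻¹ : H →L[𝕜] H) ((u : H →L[𝕜] H) f) = f := by
  change ((↑u⁻¹ : H →L[𝕜] H) * ↑u) f = f
  rw [← Submonoid.coe_mul, inv_mul_cancel]
  rfl

lemma norm_eq_one_of_apply_eq_smul (u : unitary (H →L[𝕜] H)) {φ : H} (hφ : φ ≠ 0) {c : 𝕜}
    (h : (u : H →L[𝕜] H) φ = c • φ) : ‖c‖ = 1 := by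
  have := norm_map u φ
  rwa [h, norm_smul, mul_eq_right₀ (norm_ne_zero_iff.2 hφ)] at this

lemma norm_conj_apply_sub_self (u : unitary (H →L[𝕜] H)) (A : H →L[𝕜] H) (f : H) :
    ‖(↑u⁻¹ : H →L[𝕜] H) (A ((u : H →L[𝕜] H) f)) - f‖ =
      ‖A ((u : H →L[𝕜] H) f) - (u : H →L[𝕜] H) f‖ := by
  rw [← norm_map u⁻¹ (A _ - _), map_sub, inv_apply_apply]

lemma norm_conj_pow_apply_sub_self_of_apply_eq_smul (u : unitary (H →L[𝕜] H))
    (A : H →L[𝕜] H) {φ : H} (hφ : φ ≠ 0) {c : 𝕜} (h : (u : H →L[𝕜] H) φ = c • φ) (n : ℕ) :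
    ‖(↑(u ^ n)⁻¹ : H →L[𝕜] H) (A ((↑(u ^ n) : H →L[𝕜] H) φ)) - φ‖ = ‖A φ - φ‖ := by
  rw [norm_conj_apply_sub_self, SubmonoidClass.coe_pow,
    ContinuousLinearMap.pow_apply_of_apply_eq_smul h, map_smul, ← smul_sub, norm_smul, norm_pow,
    norm_eq_one_of_apply_eq_smul u hφ h, one_pow, one_mul]

end Unitary

/-- Theorem 4.2: for any unitary `U` on `ℓ²(ℤ;ℂ²)` and every `ξ ∈ ℝ`,
`s-lim exp(iξ x̂(t)/t) Π_p(U) = Π_p(U)`. -/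
theorem exp_velocity_on_point_spectrum
    (U : unitary (QWH →L[ℂ] QWH))
    (Pp : QWH →L[ℂ] QWH) (hPp : IsOrthoProjOnto Pp (eigSpan (U : QWH →L[ℂ] QWH)))
    (Mexp : ℝ → QWH →L[ℂ] QWH) (hM : IsPosExpFamily Mexp) :
    ∀ (ξ : ℝ) (ψ : QWH), Tendsto
      (fun t : ℕ => ((((U ^ t)⁻¹) : unitary (QWH →L[ℂ] QWH)) : QWH →L[ℂ] QWH) (Mexp (ξ / t) ((((U ^ t) : unitary (QWH →L[ℂ] QWH)) : QWH →L[ℂ] QWH) (Pp ψ))))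
      atTop (𝓝 (Pp ψ)) := by
  intro ξ ψ
  let V : ℕ → QWH →L[ℂ] QWH := fun t =>
    (↑(U ^ t)⁻¹ : QWH →L[ℂ] QWH) ∘L Mexp (ξ / t) ∘L (↑(U ^ t) : QWH →L[ℂ] QWH)
  have hV : ∀ t, ‖V t‖ ≤ 1 := fun t =>
    ContinuousLinearMap.opNorm_le_bound _ zero_le_one fun f => by
      simp only [V, ContinuousLinearMap.comp_apply, Unitary.norm_map, hM.norm_apply, one_mul,
        le_refl]
  have hMt (φ : QWH) : Tendsto (fun t : ℕ => Mexp (ξ / t) φ) atTop (𝓝 φ) :=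
    (hM.tendsto_nhds_zero φ).comp (tendsto_const_div_atTop_nhds_zero_nat ξ)
  have heig : eigSpan (U : QWH →L[ℂ] QWH) ⊆ tendstoSelfSubmodule V atTop := by
    refine eigSpan_subset (isClosed_tendstoSelfSubmodule _ ⟨1, hV⟩) fun φ hφ c hc => ?_
    rw [mem_tendstoSelfSubmodule, tendsto_iff_norm_sub_tendsto_zero]
    simp only [V, ContinuousLinearMap.comp_apply]
    simp only [Unitary.norm_conj_pow_apply_sub_self_of_apply_eq_smul U _ hφ hc]
    exact tendsto_iff_norm_sub_tendsto_zero.1 (hMt φ)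
  exact heig ((hPp.2.2 _).1 congr($(hPp.2.1) ψ))
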